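/- Let A be a signed interaction matrix. (i) If A has at least one strictly negative entry, then for every μ ∈ ℝ with μ ≠ 0 and every initial vector b₀ ∈ ℝ^n, the iterates A^t b₀ do not converge to the constant vector (μ,…,μ). (ii) If A is reverse opposition bipartite, then there exists b₀ ∈ ℝ^n such that A^t b₀ does not converge to the zero vector. (iii) If moreover A is strongly connected, then A^t b₀ → 0 for every b₀ ∈ ℝ^n if and only if A is neither opposition bipartite nor reverse opposition bipartite. -/

import Mathlib

open Filter

variable {n : ℕ}

/-- Entrywise absolute value of a matrix. -/
def absMat (A : Matrix (Fin n) (Fin n) ℝ) : Matrix (Fin n) (Fin n) ℝ :=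
  A.map fun x => |x|

/-- `A` is strongly connected: for all `i j` there is `k ≥ 1` with `(|A|^k)_{ij} > 0`. -/
def StronglyConnected (A : Matrix (Fin n) (Fin n) ℝ) : Prop :=
  ∀ i j, ∃ k : ℕ, 1 ≤ k ∧ 0 < (absMat A ^ k) i j

/-- `A` is aperiodic: for each `i`, the gcd of `{k ≥ 1 : (|A|^k)_{ii} > 0}` is `1`,
phrased as: every common divisor of that set equals `1`. -/
def Aperiodic (A : Matrix (Fin n) (Fin n) ℝ) : Prop :=
  ∀ i, ∀ d : ℕ, (∀ k : ℕ, 1 ≤ k → 0 < (absMat A ^ k) i i → d ∣ k) → d = 1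

/-- `A` is opposition bipartite: a two-set partition (given by `S` and its
complement) with nonnegative entries within sets and nonpositive across. -/
def OppBip (A : Matrix (Fin n) (Fin n) ℝ) : Prop :=
  ∃ S : Set (Fin n), ∀ i j,
    (((i ∈ S ∧ j ∈ S) ∨ (i ∉ S ∧ j ∉ S)) → 0 ≤ A i j) ∧
    (((i ∈ S ∧ j ∉ S) ∨ (i ∉ S ∧ j ∈ S)) → A i j ≤ 0)

/-- `A` is reverse opposition bipartite: nonpositive entries within sets and
nonnegative across. -/
def RevOppBip (A : Matrix (Fin n) (Fin n) ℝ) : Prop :=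
  ∃ S : Set (Fin n), ∀ i j,
    (((i ∈ S ∧ j ∈ S) ∨ (i ∉ S ∧ j ∉ S)) → A i j ≤ 0) ∧
    (((i ∈ S ∧ j ∉ S) ∨ (i ∉ S ∧ j ∈ S)) → 0 ≤ A i j)

/-- `A` is divergent: some initial vector has no limit under iteration. -/
def Divergent (A : Matrix (Fin n) (Fin n) ℝ) : Prop :=
  ∃ b₀ : Fin n → ℝ, ¬ ∃ L : Fin n → ℝ,
    Tendsto (fun t => (A ^ t).mulVec b₀) atTop (nhds L)

/-- `A` induces a neutral consensus: iterates converge to `0` from every start. -/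
def NeutralConsensus (A : Matrix (Fin n) (Fin n) ℝ) : Prop :=
  ∀ b₀ : Fin n → ℝ, Tendsto (fun t => (A ^ t).mulVec b₀) atTop (nhds 0)

/-- A vector is a polarization if its entries take at most two values. -/
def IsPolarization (p : Fin n → ℝ) : Prop :=
  ∃ a b : ℝ, ∀ i, p i = a ∨ p i = b

/-- `A` induces a nontrivial polarization: from every start the limit exists
and is a polarization, and from some start the limit is nonzero. -/
def InducesNontrivialPolarization (A : Matrix (Fin n) (Fin n) ℝ) : Prop :=
  (∀ b₀ : Fin n → ℝ, ∃ L : Fin n → ℝ,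
      Tendsto (fun t => (A ^ t).mulVec b₀) atTop (nhds L) ∧ IsPolarization L) ∧
  (∃ (b₀ L : Fin n → ℝ),
      Tendsto (fun t => (A ^ t).mulVec b₀) atTop (nhds L) ∧ L ≠ 0)

/-! A limit of the iterates is a fixed vector of `A`, and a nonzero constant vector is not fixed,
because a negative entry pushes its row sum below `1`.

Since the rows and, by symmetry, the columns of `|A|` sum to `1`,
`2 (‖v‖² - vᵀAv) = Σᵢⱼ (|Aᵢⱼ| (vᵢ² + vⱼ²) - 2 Aᵢⱼ vᵢ vⱼ)`, a sum of nonnegative terms, so every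
eigenvalue of `A` is at most `1`. For the eigenvalue `1` all terms vanish: `|v|` is constant along
the edges of `|A|`, hence nowhere zero under strong connectivity, and the signs of `v` form an
opposition bipartition. The eigenvalue `-1` of `A` is the eigenvalue `1` of `-A`, and `A` is
reverse opposition bipartite iff `-A` is opposition bipartite. Conversely, the `±1` indicator of a
bipartition is an eigenvector for `±1` whose iterates do not decay, while if every eigenvalue has
modulus `< 1`, expanding in an orthonormal eigenbasis shows that all iterates decay. -/

open Matrix

section Iteration

variable {ι : Type*} [Fintype ι] [DecidableEq ι] {A : Matrix ι ι ℝ}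

theorem pow_mulVec_of_mulVec_eq_smul {v : ι → ℝ} {c : ℝ} (h : A *ᵥ v = c • v) (t : ℕ) :
    (A ^ t) *ᵥ v = c ^ t • v := by
  induction t with
  | zero => simp
  | succ t ih => rw [pow_succ, ← mulVec_mulVec, h, mulVec_smul, ih, smul_smul, ← pow_succ']

theorem mulVec_eq_of_tendsto_pow_mulVec {b L : ι → ℝ}
    (h : Tendsto (fun t => (A ^ t) *ᵥ b) atTop (nhds L)) : A *ᵥ L = L := by
  have hA : Tendsto (fun t => A *ᵥ ((A ^ t) *ᵥ b)) atTop (nhds (A *ᵥ L)) :=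
    ((continuous_const.matrix_mulVec continuous_id).tendsto L).comp h
  have hshift : Tendsto (fun t => A *ᵥ ((A ^ t) *ᵥ b)) atTop (nhds L) := by
    simpa only [Function.comp_def, pow_succ', ← mulVec_mulVec] using
      h.comp (tendsto_add_atTop_nat 1)
  exact tendsto_nhds_unique hA hshift

theorem not_tendsto_pow_mulVec_zero {v : ι → ℝ} (hv : v ≠ 0) {c : ℝ} (hc : 1 ≤ |c|)
    (h : A *ᵥ v = c • v) : ¬ Tendsto (fun t => (A ^ t) *ᵥ v) atTop (nhds 0) := by
  intro hlim
  obtain ⟨t, ht⟩ := ((tendsto_zero_iff_norm_tendsto_zero.mp hlim).eventually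
    (gt_mem_nhds (norm_pos_iff.mpr hv))).exists
  rw [pow_mulVec_of_mulVec_eq_smul h, norm_smul, norm_pow, Real.norm_eq_abs] at ht
  nlinarith [one_le_pow₀ (n := t) hc, norm_nonneg v]

theorem tendsto_pow_mulVec_zero_of_abs_eigenvalue_lt_one (hA : A.IsHermitian)
    (h : ∀ (c : ℝ) (v : ι → ℝ), v ≠ 0 → A *ᵥ v = c • v → |c| < 1) (b : ι → ℝ) :
    Tendsto (fun t => (A ^ t) *ᵥ b) atTop (nhds 0) := by
  set e := hA.eigenvectorBasis
  have hb : b = ∑ i, e.repr (WithLp.toLp 2 b) i • ⇑(e i) := by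
    simpa only [WithLp.ofLp_sum, WithLp.ofLp_smul] using congrArg WithLp.ofLp (e.sum_repr _).symm
  have he : ∀ i, (⇑(e i) : ι → ℝ) ≠ 0 := fun i h0 =>
    e.orthonormal.ne_zero i (by simpa using congrArg (WithLp.toLp 2) h0)
  have hpow : ∀ i t, (A ^ t) *ᵥ ⇑(e i) = hA.eigenvalues i ^ t • ⇑(e i) := fun i =>
    pow_mulVec_of_mulVec_eq_smul (hA.mulVec_eigenvectorBasis i)
  rw [hb]
  simp only [mulVec_sum, mulVec_smul, hpow]
  simpa using tendsto_finsetSum Finset.univ fun i _ =>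
    ((tendsto_pow_atTop_nhds_zero_of_abs_lt_one
      (h _ _ (he i) (hA.mulVec_eigenvectorBasis i))).smul_const (⇑(e i))).const_smul
        (e.repr (WithLp.toLp 2 b) i)

end Iteration

section AbsRowSum

variable {ι : Type*} [Fintype ι] {A : Matrix ι ι ℝ}

theorem mulVec_const_ne_const (hrow : ∀ i, ∑ j, |A i j| = 1) {i j : ι} (hij : A i j < 0)
    {μ : ℝ} (hμ : μ ≠ 0) : A *ᵥ (fun _ => μ) ≠ fun _ => μ := by
  intro h
  have hsum : (∑ k, A i k) * μ = 1 * μ := by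
    simpa [mulVec, dotProduct, Finset.sum_mul] using congrFun h i
  have hlt : ∑ k, A i k < ∑ k, |A i k| :=
    Finset.sum_lt_sum (fun k _ => le_abs_self _) ⟨j, Finset.mem_univ j, hij.trans_le (abs_nonneg _)⟩
  rw [hrow, ← mul_right_cancel₀ hμ hsum] at hlt
  exact hlt.false

theorem two_mul_mul_le_abs_mul_sq_add_sq (a x y : ℝ) :
    2 * (a * x * y) ≤ |a| * (x ^ 2 + y ^ 2) := by
  rcases abs_cases a with ⟨ha, h0⟩ | ⟨ha, h0⟩ <;> rw [ha] <;>
    nlinarith [sq_nonneg (x - y), sq_nonneg (x + y)]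

theorem abs_eq_abs_of_abs_mul_sq_add_sq_eq {a x y : ℝ} (ha : a ≠ 0)
    (h : |a| * (x ^ 2 + y ^ 2) = 2 * (a * x * y)) : |x| = |y| := by
  have hsq : |a| * (|x| - |y|) ^ 2 = 2 * (a * x * y) - 2 * |a * x * y| := by
    rw [abs_mul, abs_mul, ← h, ← sq_abs x, ← sq_abs y]; ring
  have : |a| * (|x| - |y|) ^ 2 = 0 :=
    le_antisymm (by linarith [le_abs_self (a * x * y)]) (by positivity)
  simpa [abs_ne_zero.mpr ha, sub_eq_zero] using this

theorem two_mul_sub_dotProduct_mulVec_eq (hsym : A.IsSymm) (hrow : ∀ i, ∑ j, |A i j| = 1)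
    (v : ι → ℝ) : 2 * (v ⬝ᵥ v - v ⬝ᵥ (A *ᵥ v)) =
      ∑ i, ∑ j, (|A i j| * (v i ^ 2 + v j ^ 2) - 2 * (A i j * v i * v j)) := by
  have hcol : ∀ j, ∑ i, |A i j| = 1 := fun j => by simpa [hsym.apply] using hrow j
  have hleft : ∑ i, ∑ j, |A i j| * v i ^ 2 = v ⬝ᵥ v := by
    simp [← Finset.sum_mul, hrow, dotProduct, sq]
  have hright : ∑ i, ∑ j, |A i j| * v j ^ 2 = v ⬝ᵥ v := by
    rw [Finset.sum_comm]
    simp [← Finset.sum_mul, hcol, dotProduct, sq]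
  have hcross : ∑ i, ∑ j, A i j * v i * v j = v ⬝ᵥ (A *ᵥ v) := by
    simp only [dotProduct, mulVec, Finset.mul_sum]
    exact Finset.sum_congr rfl fun i _ => Finset.sum_congr rfl fun j _ => by ring
  simp only [mul_add, Finset.sum_sub_distrib, Finset.sum_add_distrib, ← Finset.mul_sum, hleft,
    hright, hcross]
  ring

theorem dotProduct_mulVec_le_dotProduct_self (hsym : A.IsSymm) (hrow : ∀ i, ∑ j, |A i j| = 1)
    (v : ι → ℝ) : v ⬝ᵥ (A *ᵥ v) ≤ v ⬝ᵥ v := by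
  have hid := two_mul_sub_dotProduct_mulVec_eq hsym hrow v
  have hnonneg : 0 ≤ ∑ i, ∑ j, (|A i j| * (v i ^ 2 + v j ^ 2) - 2 * (A i j * v i * v j)) :=
    Finset.sum_nonneg fun i _ => Finset.sum_nonneg fun j _ =>
      sub_nonneg.mpr (two_mul_mul_le_abs_mul_sq_add_sq _ _ _)
  linarith

theorem abs_mul_sq_add_sq_eq_of_dotProduct_mulVec_eq (hsym : A.IsSymm)
    (hrow : ∀ i, ∑ j, |A i j| = 1) {v : ι → ℝ} (h : v ⬝ᵥ (A *ᵥ v) = v ⬝ᵥ v) (i j : ι) :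
    |A i j| * (v i ^ 2 + v j ^ 2) = 2 * (A i j * v i * v j) := by
  have hterm : ∀ i j, 0 ≤ |A i j| * (v i ^ 2 + v j ^ 2) - 2 * (A i j * v i * v j) := fun i j =>
    sub_nonneg.mpr (two_mul_mul_le_abs_mul_sq_add_sq _ _ _)
  have hzero := two_mul_sub_dotProduct_mulVec_eq hsym hrow v
  rw [h, sub_self, mul_zero, eq_comm] at hzero
  have hrow_zero := (Finset.sum_eq_zero_iff_of_nonneg fun i _ =>
    Finset.sum_nonneg fun j _ => hterm i j).mp hzero i (Finset.mem_univ i)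
  exact sub_eq_zero.mp
    ((Finset.sum_eq_zero_iff_of_nonneg fun j _ => hterm i j).mp hrow_zero j (Finset.mem_univ j))

theorem eigenvalue_le_one (hsym : A.IsSymm) (hrow : ∀ i, ∑ j, |A i j| = 1) {c : ℝ}
    {v : ι → ℝ} (hv : v ≠ 0) (h : A *ᵥ v = c • v) : c ≤ 1 := by
  have hpos : 0 < v ⬝ᵥ v := by simpa using dotProduct_self_star_pos_iff.mpr hv
  have hle := dotProduct_mulVec_le_dotProduct_self hsym hrow v
  rw [h, dotProduct_smul, smul_eq_mul] at hle
  exact (mul_le_iff_le_one_left hpos).mp hle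

end AbsRowSum

theorem eq_of_pow_apply_pos {ι R α : Type*} [Fintype ι] [DecidableEq ι] [Semiring R]
    [LinearOrder R] [IsStrictOrderedRing R] {M : Matrix ι ι R}
    (hM : ∀ i j, 0 ≤ M i j) {f : ι → α} (hf : ∀ i j, 0 < M i j → f i = f j) (k : ℕ) {i j : ι}
    (h : 0 < (M ^ k) i j) : f i = f j := by
  induction k generalizing j with
  | zero =>
    rcases eq_or_ne i j with rfl | hne
    · rfl
    · simp [one_apply_ne hne] at h
  | succ k ih =>
    rw [pow_succ, mul_apply] at h
    obtain ⟨l, -, hl⟩ := (Finset.sum_pos_iff_of_nonneg fun l _ =>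
      mul_nonneg (pow_apply_nonneg hM k i l) (hM l j)).mp h
    exact (ih (pos_of_mul_pos_left hl (hM l j))).trans
      (hf l j (pos_of_mul_pos_right hl (pow_apply_nonneg hM k i l)))

section SignedInteraction

variable {A : Matrix (Fin n) (Fin n) ℝ}

theorem absMat_neg (A : Matrix (Fin n) (Fin n) ℝ) : absMat (-A) = absMat A := by
  ext; simp [absMat]

theorem StronglyConnected.neg (h : StronglyConnected A) : StronglyConnected (-A) := by
  simpa only [StronglyConnected, absMat_neg] using h

theorem revOppBip_iff_oppBip_neg : RevOppBip A ↔ OppBip (-A) :=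
  exists_congr fun S => forall₂_congr fun i j => by rw [neg_apply, neg_nonneg, neg_nonpos]

theorem oppBip_of_mul_nonneg {v : Fin n → ℝ} (hv : ∀ i, v i ≠ 0)
    (h : ∀ i j, 0 ≤ A i j * v i * v j) : OppBip A := by
  have hneg : ∀ i, ¬ 0 < v i → v i < 0 := fun i hi => lt_of_le_of_ne (not_lt.mp hi) (hv i)
  refine ⟨{i | 0 < v i}, fun i j => ⟨?_, ?_⟩⟩ <;>
    rintro (⟨hi, hj⟩ | ⟨hi, hj⟩) <;> simp only [Set.mem_ofPred_eq] at hi hj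
  · nlinarith [h i j, mul_pos hi hj]
  · nlinarith [h i j, mul_pos_of_neg_of_neg (hneg i hi) (hneg j hj)]
  · nlinarith [h i j, mul_neg_of_pos_of_neg hi (hneg j hj)]
  · nlinarith [h i j, mul_neg_of_neg_of_pos (hneg i hi) hj]

theorem OppBip.exists_abs_eq_one_mulVec_eq_self (hrow : ∀ i, ∑ j, |A i j| = 1)
    (h : OppBip A) : ∃ σ : Fin n → ℝ, (∀ i, |σ i| = 1) ∧ A *ᵥ σ = σ := by
  classical
  obtain ⟨S, hS⟩ := h
  set σ : Fin n → ℝ := fun i => if i ∈ S then 1 else -1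
  have hσ : ∀ i j, A i j * σ j = |A i j| * σ i := by
    intro i j
    by_cases hi : i ∈ S <;> by_cases hj : j ∈ S <;>
      simp [σ, hi, hj, abs_of_nonneg, abs_of_nonpos, (hS i j).1, (hS i j).2]
  refine ⟨σ, fun i => by by_cases hi : i ∈ S <;> simp [σ, hi], funext fun i => ?_⟩
  simp only [mulVec, dotProduct, hσ, ← Finset.sum_mul, hrow, one_mul]

theorem RevOppBip.exists_abs_eq_one_mulVec_eq_neg_self (hrow : ∀ i, ∑ j, |A i j| = 1)
    (h : RevOppBip A) : ∃ σ : Fin n → ℝ, (∀ i, |σ i| = 1) ∧ A *ᵥ σ = -σ := by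
  obtain ⟨σ, hσ, hAσ⟩ := (revOppBip_iff_oppBip_neg.mp h).exists_abs_eq_one_mulVec_eq_self
    (by simpa using hrow)
  exact ⟨σ, hσ, by rw [← neg_eq_iff_eq_neg, ← neg_mulVec, hAσ]⟩

theorem oppBip_of_mulVec_eq_self (hsym : A.IsSymm) (hrow : ∀ i, ∑ j, |A i j| = 1)
    (hsc : StronglyConnected A) {v : Fin n → ℝ} (hv : v ≠ 0) (h : A *ᵥ v = v) : OppBip A := by
  have hedge := abs_mul_sq_add_sq_eq_of_dotProduct_mulVec_eq hsym hrow (v := v) (by rw [h])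
  have habs : ∀ i j, |v i| = |v j| := fun i j => by
    obtain ⟨k, -, hk⟩ := hsc i j
    exact eq_of_pow_apply_pos (fun i j => abs_nonneg (A i j))
      (fun i j hij => abs_eq_abs_of_abs_mul_sq_add_sq_eq (abs_pos.mp hij) (hedge i j)) k hk
  obtain ⟨j, hj⟩ : ∃ j, v j ≠ 0 := Function.ne_iff.mp hv
  refine oppBip_of_mul_nonneg (v := v)
    (fun i hi => hj (abs_eq_zero.mp (by rw [← habs i j, hi, abs_zero]))) fun i j => ?_
  have : 0 ≤ |A i j| * (v i ^ 2 + v j ^ 2) := by positivity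
  linarith [hedge i j]

theorem eigenvalue_lt_one (hsym : A.IsSymm) (hrow : ∀ i, ∑ j, |A i j| = 1)
    (hsc : StronglyConnected A) (hOpp : ¬ OppBip A) {c : ℝ} {v : Fin n → ℝ} (hv : v ≠ 0)
    (h : A *ᵥ v = c • v) : c < 1 :=
  (eigenvalue_le_one hsym hrow hv h).lt_of_ne fun hc =>
    hOpp (oppBip_of_mulVec_eq_self hsym hrow hsc hv (by rw [h, hc, one_smul]))

theorem abs_eigenvalue_lt_one (hsym : A.IsSymm) (hrow : ∀ i, ∑ j, |A i j| = 1)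
    (hsc : StronglyConnected A) (hOpp : ¬ OppBip A) (hRev : ¬ RevOppBip A) {c : ℝ}
    {v : Fin n → ℝ} (hv : v ≠ 0) (h : A *ᵥ v = c • v) : |c| < 1 := by
  have hneg : -c < 1 := eigenvalue_lt_one hsym.neg (by simpa using hrow) hsc.neg
    (mt revOppBip_iff_oppBip_neg.mpr hRev) hv (by rw [neg_mulVec, h, neg_smul])
  exact abs_lt.mpr ⟨by linarith, eigenvalue_lt_one hsym hrow hsc hOpp hv h⟩

end SignedInteraction

theorem stmt_16_general (n : ℕ) (hn : 2 ≤ n) (A : Matrix (Fin n) (Fin n) ℝ)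
    (hsym : A.IsSymm) (hrow : ∀ i, ∑ j, |A i j| = 1) :
    ((∃ i j, A i j < 0) → ∀ μ : ℝ, μ ≠ 0 → ∀ b₀ : Fin n → ℝ,
        ¬ Tendsto (fun t => (A ^ t).mulVec b₀) atTop (nhds fun _ => μ)) ∧
    (RevOppBip A → ∃ b₀ : Fin n → ℝ,
        ¬ Tendsto (fun t => (A ^ t).mulVec b₀) atTop (nhds 0)) ∧
    (StronglyConnected A →
      ((∀ b₀ : Fin n → ℝ, Tendsto (fun t => (A ^ t).mulVec b₀) atTop (nhds 0)) ↔
        (¬ OppBip A ∧ ¬ RevOppBip A))) := by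
  have hne : ∀ σ : Fin n → ℝ, (∀ i, |σ i| = 1) → σ ≠ 0 := fun σ hσ h0 => by
    simpa [h0] using hσ ⟨0, by omega⟩
  have hrev : RevOppBip A → ∃ b₀ : Fin n → ℝ,
      ¬ Tendsto (fun t => (A ^ t) *ᵥ b₀) atTop (nhds 0) := fun h => by
    obtain ⟨σ, hσ, hAσ⟩ := h.exists_abs_eq_one_mulVec_eq_neg_self hrow
    exact ⟨σ, not_tendsto_pow_mulVec_zero (hne σ hσ) (c := -1) (by simp) (by simpa using hAσ)⟩
  refine ⟨fun ⟨i, j, hij⟩ μ hμ b₀ h =>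
      mulVec_const_ne_const hrow hij hμ (mulVec_eq_of_tendsto_pow_mulVec h), hrev, fun hsc => ?_⟩
  refine ⟨fun hdecay => ⟨fun hOpp => ?_, fun hRev => ?_⟩, fun ⟨hOpp, hRev⟩ => ?_⟩
  · obtain ⟨σ, hσ, hAσ⟩ := hOpp.exists_abs_eq_one_mulVec_eq_self hrow
    exact not_tendsto_pow_mulVec_zero (hne σ hσ) (c := 1) (by simp) (by simpa using hAσ) (hdecay σ)
  · obtain ⟨b₀, hb₀⟩ := hrev hRev
    exact hb₀ (hdecay b₀)
  · exact tendsto_pow_mulVec_zero_of_abs_eigenvalue_lt_one (isHermitian_iff_isSymm.mpr hsym)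
      fun c v hv h => abs_eigenvalue_lt_one hsym hrow hsc hOpp hRev hv h

/-- no wisdom for signed interaction matrices. (i) any strictly
negative entry rules out convergence to a nonzero consensus; (ii) reverse
opposition bipartiteness rules out convergence to `0` from some start;
(iii) under strong connectivity, convergence to `0` from every start holds iff
`A` is neither opposition bipartite nor reverse opposition bipartite. -/
theorem stmt_16 (n : ℕ) (hn : 2 ≤ n) (A : Matrix (Fin n) (Fin n) ℝ)
    (hsym : A.IsSymm) (hdiag : ∀ i, A i i = 0) (hrow : ∀ i, ∑ j, |A i j| = 1) :
    ((∃ i j, A i j < 0) → ∀ μ : ℝ, μ ≠ 0 → ∀ b₀ : Fin n → ℝ,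
        ¬ Tendsto (fun t => (A ^ t).mulVec b₀) atTop (nhds fun _ => μ)) ∧
    (RevOppBip A → ∃ b₀ : Fin n → ℝ,
        ¬ Tendsto (fun t => (A ^ t).mulVec b₀) atTop (nhds 0)) ∧
    (StronglyConnected A →
      ((∀ b₀ : Fin n → ℝ, Tendsto (fun t => (A ^ t).mulVec b₀) atTop (nhds 0)) ↔
        (¬ OppBip A ∧ ¬ RevOppBip A))) :=
  stmt_16_general n hn A hsym hrow
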